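/- Let G = (S, C, R) be a reaction network with a set of intermediate species Y ⊆ S and let G* = (S*, C*, R*) be the reduction of G by removal of Y. For a subset Σ ⊆ S, let M(Σ) denote the set of intermediates Y ∈ Y for which there is a directed reaction path Y → Y^(1) → ⋯ → Y^(k) → y' in G with Y^(1),…,Y^(k) ∈ Y and the support of the complex y' intersecting Σ. If Σ* is a siphon of G*, then Σ := Σ* ∪ M(Σ*) is a siphon of G; furthermore, every siphon of G containing Σ* contains M(Σ*). -/

import Mathlib

/-- A reaction network: a finite set of species, a finite set of complexes
(nonnegative vectors supported on the species), and a finite set of reactions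
(a digraph on the complexes with no self-loops), such that every complex takes
part in some reaction and every species is part of some complex. -/
structure RN (ι : Type) where
  species : Finset ι
  complexes : Finset (ι → ℝ)
  reactions : Finset ((ι → ℝ) × (ι → ℝ))
  complexes_nonneg : ∀ y ∈ complexes, ∀ i, 0 ≤ y i
  complexes_supp : ∀ y ∈ complexes, ∀ i, y i ≠ 0 → i ∈ species
  react_mem_fst : ∀ r ∈ reactions, r.1 ∈ complexes
  react_mem_snd : ∀ r ∈ reactions, r.2 ∈ complexes
  no_loops : ∀ r ∈ reactions, r.1 ≠ r.2
  complexes_used : ∀ y ∈ complexes, ∃ r ∈ reactions, r.1 = y ∨ r.2 = y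
  species_used : ∀ i ∈ species, ∃ y ∈ complexes, y i ≠ 0

namespace RN

variable {ι : Type}

/-- A siphon: a nonempty set of species such that every reaction having a
product species in it also has a reactant species in it. -/
def IsSiphon (G : RN ι) (T : Set ι) : Prop :=
  T.Nonempty ∧ T ⊆ ↑G.species ∧
    ∀ r ∈ G.reactions, (∃ i ∈ T, 0 < r.2 i) → ∃ i ∈ T, 0 < r.1 i

/-- A minimal siphon: a siphon not properly containing any other siphon. -/
def MinimalSiphon (G : RN ι) (T : Set ι) : Prop :=
  G.IsSiphon T ∧ ∀ T' : Set ι, G.IsSiphon T' → T' ⊆ T → T' = T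

/-- A nonempty set of species is drainable if some finite sequence of reactions
(with repetitions allowed) strictly decreases every one of its coordinates. -/
def Drainable (G : RN ι) (T : Set ι) : Prop :=
  T.Nonempty ∧ T ⊆ ↑G.species ∧
    ∃ L : List ((ι → ℝ) × (ι → ℝ)), (∀ r ∈ L, r ∈ G.reactions) ∧
      ∀ i ∈ T, (L.map (fun r => r.2 i - r.1 i)).sum < 0

/-- A nonempty set of species is self-replicable if some finite sequence of
reactions (with repetitions allowed) strictly increases every one of its
coordinates. -/
def SelfReplicable (G : RN ι) (T : Set ι) : Prop :=
  T.Nonempty ∧ T ⊆ ↑G.species ∧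
    ∃ L : List ((ι → ℝ) × (ι → ℝ)), (∀ r ∈ L, r ∈ G.reactions) ∧
      ∀ i ∈ T, 0 < (L.map (fun r => r.2 i - r.1 i)).sum

/-- A P-semiflow: a nonzero nonnegative vector supported on the species with
ωᵀN = 0, i.e. ω · (y' - y) = 0 for every reaction y → y'. -/
def IsPSemiflow (G : RN ι) (ω : ι → ℝ) : Prop :=
  (∀ i, 0 ≤ ω i) ∧ (∀ i, ω i ≠ 0 → i ∈ G.species) ∧ ω ≠ 0 ∧
    ∀ r ∈ G.reactions, ∑ i ∈ G.species, ω i * (r.2 i - r.1 i) = 0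

/-- The siphon/P-semiflow property: every siphon contains the support of a
P-semiflow. -/
def SiphonPSemiflowProperty (G : RN ι) : Prop :=
  ∀ T : Set ι, G.IsSiphon T → ∃ ω : ι → ℝ, G.IsPSemiflow ω ∧ {i | 0 < ω i} ⊆ T

/-- Consistency: there is a strictly positive T-semiflow, i.e. strictly
positive reaction weights v with N v = 0. -/
def Consistent (G : RN ι) : Prop :=
  ∃ v : ((ι → ℝ) × (ι → ℝ)) → ℝ, (∀ r ∈ G.reactions, 0 < v r) ∧
    ∀ i : ι, ∑ r ∈ G.reactions, v r * (r.2 i - r.1 i) = 0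

/-- Conservativity: there is a strictly positive conservation law ω ≫ 0 with
ωᵀN = 0. -/
def Conservative (G : RN ι) : Prop :=
  ∃ ω : ι → ℝ, (∀ i ∈ G.species, 0 < ω i) ∧
    ∀ r ∈ G.reactions, ∑ i ∈ G.species, ω i * (r.2 i - r.1 i) = 0

/-- A directed reaction path from `y` to `y'` all of whose non-endpoint
complexes lie in the set `A`. -/
def PathThrough (G : RN ι) (A : Set (ι → ℝ)) (y y' : ι → ℝ) : Prop :=
  ∃ L : List (ι → ℝ), (∀ z ∈ L, z ∈ A) ∧
    List.Chain (fun a b => (a, b) ∈ G.reactions) y (L ++ [y'])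

end RN

variable {ι : Type}

/-- The complex consisting of the single species `j` (with unit coefficient),
for `j` in the given set. -/
def InterCplx [DecidableEq ι] (Y : Finset ι) (z : ι → ℝ) : Prop :=
  ∃ j ∈ Y, z = Pi.single j 1

/-- The complex `z` is supported off the set `Y`. -/
def OffSet (Y : Finset ι) (z : ι → ℝ) : Prop := ∀ j ∈ Y, z j = 0

namespace RN

/-- `Y` is a set of intermediate species of `G`: (I1) every complex is either
supported off `Y` or equals a single species of `Y` with unit coefficient;
(I2) every `Y`-complex is connected to non-intermediate complexes by directed
reaction paths, in both directions, all of whose non-endpoints are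
intermediates. -/
def IsIntermediateSet [DecidableEq ι] (G : RN ι) (Y : Finset ι) : Prop :=
  Y.Nonempty ∧ Y ⊆ G.species ∧
    (∀ y ∈ G.complexes, OffSet Y y ∨ InterCplx Y y) ∧
    (∀ j ∈ Y, ∃ y ∈ G.complexes, ∃ y' ∈ G.complexes, OffSet Y y ∧ OffSet Y y' ∧
      G.PathThrough {z | InterCplx Y z} y (Pi.single j 1) ∧
      G.PathThrough {z | InterCplx Y z} (Pi.single j 1) y')

/-- `G'` is the reduction of `G` by removal of the set of intermediates `Y`:
its reactions are exactly the pairs `y → y'` of distinct non-intermediate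
complexes of `G` joined by a directed reaction path all of whose non-endpoints
are intermediates (in particular all reactions of `G` between non-intermediate
complexes). -/
def IsIntermediateReduction [DecidableEq ι] (G : RN ι) (Y : Finset ι) (G' : RN ι) : Prop :=
  ∀ p : (ι → ℝ) × (ι → ℝ), p ∈ G'.reactions ↔
    (p.1 ∈ G.complexes ∧ p.2 ∈ G.complexes ∧ OffSet Y p.1 ∧ OffSet Y p.2 ∧
      p.1 ≠ p.2 ∧ G.PathThrough {z | InterCplx Y z} p.1 p.2)

end RN

/-- The projection of a complex onto the coordinates outside `E` (the
coordinates in `E` are set to zero). -/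
def projOff [DecidableEq ι] (E : Finset ι) (y : ι → ℝ) : ι → ℝ :=
  fun i => if i ∈ E then 0 else y i

namespace RN

/-- `E` is a set of catalysts of `G`, with `GE` the subnetwork of `G` implied
by `E`: (C1) every reaction either leaves the `E`-coordinates untouched or is
supported entirely in `E`; `GE` consists of the reactions of `G` involving
only species of `E`; and (C2) `GE` has no drainable and no self-replicable
siphons. -/
def IsCatalystSet (G GE : RN ι) (E : Finset ι) : Prop :=
  E.Nonempty ∧ E ⊆ G.species ∧
    (∀ r ∈ G.reactions, (∀ i ∈ E, r.1 i = r.2 i) ∨ (∀ i, i ∉ E → r.1 i = 0 ∧ r.2 i = 0)) ∧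
    (∀ p : (ι → ℝ) × (ι → ℝ), p ∈ GE.reactions ↔
      (p ∈ G.reactions ∧ (∀ i, p.1 i ≠ 0 → i ∈ E) ∧ (∀ i, p.2 i ≠ 0 → i ∈ E))) ∧
    (∀ T : Set ι, GE.IsSiphon T → ¬ GE.Drainable T ∧ ¬ GE.SelfReplicable T)

/-- `G'` is the reduction of `G` by removal of the set of catalysts `E`: its
reactions are the projections off `E` of those reactions of `G` at least one
of whose projected sides is nonzero. -/
def IsCatalystReduction [DecidableEq ι] (G : RN ι) (E : Finset ι) (G' : RN ι) : Prop :=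
  ∀ p : (ι → ℝ) × (ι → ℝ), p ∈ G'.reactions ↔
    ∃ r ∈ G.reactions, p = (projOff E r.1, projOff E r.2) ∧
      (projOff E r.1 ≠ 0 ∨ projOff E r.2 ≠ 0)

/-- A monomolecular network: every complex is either zero or a single species
with unit coefficient. -/
def Monomolecular [DecidableEq ι] (G : RN ι) : Prop :=
  ∀ y ∈ G.complexes, y = 0 ∨ ∃ i ∈ G.species, y = Pi.single i 1

end RN

/-- The set `M(Σ)` of intermediates `Y ∈ 𝒴` from which there is a directed
reaction path `Y → Y⁽¹⁾ → ⋯ → Y⁽ᵏ⁾ → y'` in `G` with all `Y⁽ʲ⁾` intermediates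
and with the support of `y'` intersecting `Σ`. -/
def Mset {ι : Type} [DecidableEq ι] (G : RN ι) (Y : Finset ι) (T : Set ι) : Set ι :=
  {j | j ∈ Y ∧ ∃ y' : ι → ℝ, (∃ i ∈ T, 0 < y' i) ∧
    G.PathThrough {z | InterCplx Y z} (Pi.single j 1) y'}

/-! A siphon is closed backwards along reactions, hence along reaction paths. Given a reaction
`y → y'` of `G` with `y'` meeting `Σ* ∪ M(Σ*)`, prefixing it to the path that puts `y'` into
`M(Σ*)` (or using it alone) gives a path of intermediates from `y` to a complex meeting `Σ*`.
If `y` is an intermediate, it lies in `M(Σ*)`; otherwise the path is either trivial or a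
reaction of `G*`, and the siphon property of `Σ*` applies. The second claim is backward closure
of a siphon of `G` along the paths defining `M(Σ*)`. -/

namespace RN

variable {G : RN ι} {A : Set (ι → ℝ)} {y y' z : ι → ℝ}

theorem pathThrough_iff :
    G.PathThrough A y y' ↔ ∃ L : List (ι → ℝ), (∀ z ∈ L, z ∈ A) ∧
      List.IsChain (fun a b => (a, b) ∈ G.reactions) (y :: (L ++ [y'])) :=
  Iff.rfl

theorem PathThrough.of_mem_reactions (h : (y, y') ∈ G.reactions) : G.PathThrough A y y' :=
  pathThrough_iff.2 ⟨[], by simp, by simpa using h⟩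

theorem PathThrough.cons (h : (y, z) ∈ G.reactions) (hz : z ∈ A) (hp : G.PathThrough A z y') :
    G.PathThrough A y y' := by
  obtain ⟨L, hL, hchain⟩ := pathThrough_iff.1 hp
  refine pathThrough_iff.2 ⟨z :: L, ?_, ?_⟩
  · simpa [List.forall_mem_cons] using ⟨hz, hL⟩
  · rw [List.cons_append, List.isChain_cons_cons]
    exact ⟨h, hchain⟩

theorem PathThrough.induction_on {P : (ι → ℝ) → Prop} (hp : G.PathThrough A y y')
    (last : ∀ x, (x, y') ∈ G.reactions → P x)
    (step : ∀ x w, (x, w) ∈ G.reactions → w ∈ A → P w → P x) : P y := by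
  obtain ⟨L, hL, hchain⟩ := pathThrough_iff.1 hp
  induction L generalizing y with
  | nil => exact last y (by simpa using hchain)
  | cons w L ih =>
    rw [List.cons_append, List.isChain_cons_cons] at hchain
    rw [List.forall_mem_cons] at hL
    exact step y w hchain.1 hL.1 (ih (pathThrough_iff.2 ⟨L, hL.2, hchain.2⟩) hL.2 hchain.2)

theorem PathThrough.mem_complexes_right (hp : G.PathThrough A y y') : y' ∈ G.complexes :=
  hp.induction_on (fun _ hx => G.react_mem_snd _ hx) fun _ _ _ _ h => h

theorem IsSiphon.exists_pos_of_pathThrough {T : Set ι} (hT : G.IsSiphon T)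
    (hp : G.PathThrough A y y') (hy' : ∃ i ∈ T, 0 < y' i) : ∃ i ∈ T, 0 < y i :=
  hp.induction_on (fun x hx => hT.2.2 (x, y') hx hy') fun x w hxw _ hw => hT.2.2 (x, w) hxw hw

end RN

theorem exists_mem_single_pos_iff [DecidableEq ι] {T : Set ι} {j : ι} :
    (∃ i ∈ T, 0 < (Pi.single j (1 : ℝ) : ι → ℝ) i) ↔ j ∈ T := by
  constructor
  · rintro ⟨i, hi, hpos⟩
    obtain rfl : i = j := by
      by_contra hne
      simp [Pi.single_eq_of_ne hne] at hpos
    exact hi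
  · exact fun hj => ⟨j, hj, by simp⟩

theorem OffSet.of_exists_pos [DecidableEq ι] {Y : Finset ι} {T : Set ι} {z : ι → ℝ}
    (hz : OffSet Y z ∨ InterCplx Y z) (hTY : ∀ i ∈ T, i ∉ Y) (hpos : ∃ i ∈ T, 0 < z i) :
    OffSet Y z := by
  rcases hz with hz | ⟨j, hjY, rfl⟩
  · exact hz
  · exact absurd hjY (hTY j (exists_mem_single_pos_iff.1 hpos))

namespace RN

variable [DecidableEq ι] {G G' : RN ι} {Y : Finset ι} {T' : Set ι}

theorem IsIntermediateReduction.mem_species (hred : G.IsIntermediateReduction Y G') {i : ι}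
    (hi : i ∈ G'.species) : i ∈ G.species ∧ i ∉ Y := by
  obtain ⟨y, hy, hyi⟩ := G'.species_used i hi
  obtain ⟨r, hr, hry | hry⟩ := G'.complexes_used y hy <;> subst hry
  · obtain ⟨hr₁, -, hoff, -⟩ := (hred r).1 hr
    exact ⟨G.complexes_supp _ hr₁ i hyi, fun hiY => hyi (hoff i hiY)⟩
  · obtain ⟨-, hr₂, -, hoff, -⟩ := (hred r).1 hr
    exact ⟨G.complexes_supp _ hr₂ i hyi, fun hiY => hyi (hoff i hiY)⟩

theorem mset_subset_of_isSiphon {T : Set ι} (hT : G.IsSiphon T) (hT'T : T' ⊆ T) :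
    Mset G Y T' ⊆ T := by
  rintro j ⟨-, y', ⟨i, hi, hpos⟩, hp⟩
  exact exists_mem_single_pos_iff.1 (hT.exists_pos_of_pathThrough hp ⟨i, hT'T hi, hpos⟩)

theorem exists_pathThrough_of_mem_reactions
    (hI1 : ∀ y ∈ G.complexes, OffSet Y y ∨ InterCplx Y y) (hT'Y : ∀ i ∈ T', i ∉ Y)
    {y y' : ι → ℝ} (hr : (y, y') ∈ G.reactions) (hy' : ∃ i ∈ T' ∪ Mset G Y T', 0 < y' i) :
    ∃ y'', (∃ i ∈ T', 0 < y'' i) ∧ G.PathThrough {z | InterCplx Y z} y y'' := by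
  rcases hI1 y' (G.react_mem_snd _ hr) with hoff | ⟨k, hkY, rfl⟩
  · obtain ⟨i, hi | hi, hpos⟩ := hy'
    · exact ⟨y', ⟨i, hi, hpos⟩, .of_mem_reactions hr⟩
    · exact absurd (hoff i hi.1) hpos.ne'
  · obtain hk | ⟨-, y'', hy'', hp⟩ := exists_mem_single_pos_iff.1 hy'
    · exact absurd hkY (hT'Y k hk)
    · exact ⟨y'', hy'', hp.cons hr ⟨k, hkY, rfl⟩⟩

theorem isSiphon_union_mset (hYS : Y ⊆ G.species)
    (hI1 : ∀ y ∈ G.complexes, OffSet Y y ∨ InterCplx Y y)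
    (hred : G.IsIntermediateReduction Y G') (hT' : G'.IsSiphon T') :
    G.IsSiphon (T' ∪ Mset G Y T') := by
  have hT'Y : ∀ i ∈ T', i ∉ Y := fun i hi => (hred.mem_species (hT'.2.1 hi)).2
  refine ⟨hT'.1.mono Set.subset_union_left, ?_, ?_⟩
  · rintro i (hi | hi)
    exacts [(hred.mem_species (hT'.2.1 hi)).1, hYS hi.1]
  rintro ⟨y, y'⟩ hr hy'
  obtain ⟨y'', hy'', hp⟩ := exists_pathThrough_of_mem_reactions hI1 hT'Y hr hy'
  rcases hI1 y (G.react_mem_fst _ hr) with hoff | ⟨j, hjY, rfl⟩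
  · -- a path of intermediates between two distinct non-intermediate complexes is a reaction of `G'`
    suffices ∃ i ∈ T', 0 < y i by
      obtain ⟨i, hi, hpos⟩ := this
      exact ⟨i, Or.inl hi, hpos⟩
    by_cases heq : y = y''
    · exact heq ▸ hy''
    have hy''C := hp.mem_complexes_right
    exact hT'.2.2 (y, y'') ((hred _).2 ⟨G.react_mem_fst (y, y') hr, hy''C, hoff,
      OffSet.of_exists_pos (hI1 _ hy''C) hT'Y hy'', heq, hp⟩) hy''
  · exact ⟨j, Or.inr ⟨hjY, y'', hy'', hp⟩, by simp⟩

end RN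

/-- Lemma 6: if `G'` is obtained from `G` by removal of a set of intermediates
`Y` and `Σ*` is a siphon of `G'`, then `Σ* ∪ M(Σ*)` is a siphon of `G`;
moreover, every siphon of `G` containing `Σ*` also contains `M(Σ*)`. -/
theorem siphon_extension_after_intermediate_removal
    {ι : Type} [DecidableEq ι] (G G' : RN ι) (Y : Finset ι)
    (hY : G.IsIntermediateSet Y) (hred : G.IsIntermediateReduction Y G')
    (T' : Set ι) (hT' : G'.IsSiphon T') :
    G.IsSiphon (T' ∪ Mset G Y T') ∧
    ∀ T : Set ι, G.IsSiphon T → T' ⊆ T → Mset G Y T' ⊆ T :=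
  ⟨RN.isSiphon_union_mset hY.2.1 hY.2.2.1 hred hT',
    fun _ hT hT'T => RN.mset_subset_of_isSiphon hT hT'T⟩
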